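/- arXiv:2112.03118 — 6 statements merged into one kernel-verified Lean document; each statement's English description precedes it below -/
import Mathlib

section
/- Let p, ρ, H, E, ε, u : ℝ² → ℝ be sufficiently smooth with ρ nowhere zero, κ > 0, and suppose i = κρH_s, E satisfies i = σE for some function σ with σE = κρH_s, and the system (1/ρ)_t = u_s, u_t = -(p + κH²/2)_s, (H/ρ)_t = E_s, ε_t = -p u_s + iE/ρ holds. Then the total energy satisfies the fully divergent conservation law: (ε + u²/2 + κH²/(2ρ))_t = -[(p + κH²/2)u]_s + κ(EH)_s. -/
/-!
In the Lagrangian variables `v = 1/ρ` and `h = H/ρ` the magnetic energy density is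
`κH²/(2ρ) = κ h H / 2`, and since `h = H v` its time derivative is `κ (H h_t - H²/2 v_t)`.
Substituting `v_t = u_s` and `h_t = E_s` and adding `u u_t` and `ε_t` from the momentum and
energy equations, all terms pair up by the product rule into `s`-derivatives of the fluxes.
-/

noncomputable def pt (f : ℝ × ℝ → ℝ) (z : ℝ × ℝ) : ℝ := fderiv ℝ f z (1, 0)
noncomputable def ps (f : ℝ × ℝ → ℝ) (z : ℝ × ℝ) : ℝ := fderiv ℝ f z (0, 1)

section

variable {F : Type*} [NormedAddCommGroup F] [NormedSpace ℝ F] {f g : F → ℝ}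
  {f' : F →L[ℝ] ℝ} {z : F}

lemma HasFDerivAt.sq_div_two (hf : HasFDerivAt f f' z) :
    HasFDerivAt (fun y => f y ^ 2 / 2) (f z • f') z := by
  rw [show (fun y => f y ^ 2 / 2) = fun y => f y * f y * 2⁻¹ by funext y; ring]
  refine ((hf.fun_mul hf).mul_const 2⁻¹).congr_fderiv ?_
  ext v
  simp only [smul_add, add_apply, smul_apply, smul_eq_mul]
  ring

/-- `f²/(2g) = (f/g) f / 2` and `f/g = f (1/g)` hold identically (also where `g` vanishes,
as `x / 0 = 0`), so the product rule suffices. -/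
lemma hasFDerivAt_sq_div_two_mul (hf : DifferentiableAt ℝ f z)
    (hg : DifferentiableAt ℝ (fun y => 1 / g y) z) :
    HasFDerivAt (fun y => f y ^ 2 / (2 * g y))
      (f z • fderiv ℝ (fun y => f y / g y) z -
        (f z ^ 2 / 2) • fderiv ℝ (fun y => 1 / g y) z) z := by
  have hquot : HasFDerivAt (fun y => f y / g y)
      (f z • fderiv ℝ (fun y => 1 / g y) z + (1 / g z) • fderiv ℝ f z) z := by
    simpa only [mul_one_div] using hf.hasFDerivAt.fun_mul hg.hasFDerivAt
  rw [show (fun y => f y ^ 2 / (2 * g y)) = fun y => f y / g y * f y * 2⁻¹ by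
    funext y; field_simp]
  refine ((hquot.fun_mul hf.hasFDerivAt).mul_const 2⁻¹).congr_fderiv ?_
  rw [hquot.fderiv]
  ext v
  simp only [smul_add, add_apply, smul_apply, smul_eq_mul, sub_apply]
  ring

theorem mhd_total_energy_conservation {p ρ H E ε u : F → ℝ} {κ : ℝ} {t s : F}
    (dp : DifferentiableAt ℝ p z) (dv : DifferentiableAt ℝ (fun y => 1 / ρ y) z)
    (dH : DifferentiableAt ℝ H z) (dE : DifferentiableAt ℝ E z)
    (dε : DifferentiableAt ℝ ε z) (du : DifferentiableAt ℝ u z)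
    (mass : fderiv ℝ (fun y => 1 / ρ y) z t = fderiv ℝ u z s)
    (momentum : fderiv ℝ u z t = -fderiv ℝ (fun y => p y + κ * H y ^ 2 / 2) z s)
    (faraday : fderiv ℝ (fun y => H y / ρ y) z t = fderiv ℝ E z s)
    (internal : fderiv ℝ ε z t = -(p z * fderiv ℝ u z s) + κ * fderiv ℝ H z s * E z) :
    fderiv ℝ (fun y => ε y + u y ^ 2 / 2 + κ * H y ^ 2 / (2 * ρ y)) z t =
      -fderiv ℝ (fun y => (p y + κ * H y ^ 2 / 2) * u y) z s +
        κ * fderiv ℝ (fun y => E y * H y) z s := by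
  have htotal := (dε.hasFDerivAt.fun_add du.hasFDerivAt.sq_div_two).fun_add
    ((hasFDerivAt_sq_div_two_mul dH dv).const_mul κ)
  have hpressure := dp.hasFDerivAt.fun_add (dH.hasFDerivAt.sq_div_two.const_mul κ)
  simp only [mul_div_assoc] at htotal hpressure momentum ⊢
  rw [hpressure.fderiv] at momentum
  rw [htotal.fderiv, (hpressure.fun_mul du.hasFDerivAt).fderiv,
    (dE.hasFDerivAt.fun_mul dH.hasFDerivAt).fderiv]
  simp only [add_apply, sub_apply, smul_apply, smul_eq_mul] at momentum ⊢
  rw [internal, momentum, mass, faraday]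
  ring

end

theorem stmt2_general (U : Set (ℝ × ℝ)) (hU : IsOpen U)
    (p ρ H E ε u i : ℝ × ℝ → ℝ) (κ : ℝ)
    (hp : ContDiffOn ℝ 2 p U) (hρ : ContDiffOn ℝ 2 ρ U)
    (hH : ContDiffOn ℝ 2 H U) (hE : ContDiffOn ℝ 2 E U)
    (hε : ContDiffOn ℝ 2 ε U) (hu : ContDiffOn ℝ 2 u U)
    (hρ0 : ∀ z ∈ U, ρ z ≠ 0)
    (hi : ∀ z ∈ U, i z = κ * ρ z * ps H z)
    (e1 : ∀ z ∈ U, pt (fun y => 1 / ρ y) z = ps u z)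
    (e2 : ∀ z ∈ U, pt u z = -(ps (fun y => p y + κ * H y ^ 2 / 2) z))
    (e3 : ∀ z ∈ U, pt (fun y => H y / ρ y) z = ps E z)
    (e4 : ∀ z ∈ U, pt ε z = -(p z * ps u z) + i z * E z / ρ z) :
    ∀ z ∈ U, pt (fun y => ε y + u y ^ 2 / 2 + κ * H y ^ 2 / (2 * ρ y)) z =
      -(ps (fun y => (p y + κ * H y ^ 2 / 2) * u y) z) +
        κ * ps (fun y => E y * H y) z := by
  intro z hz
  have hdiff {f : ℝ × ℝ → ℝ} (hf : ContDiffOn ℝ 2 f U) : DifferentiableAt ℝ f z :=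
    (hf.contDiffAt (hU.mem_nhds hz)).differentiableAt two_ne_zero
  have hv : DifferentiableAt ℝ (fun y => 1 / ρ y) z := by
    have := hdiff hρ
    fun_prop (disch := exact hρ0 z hz)
  have hinternal : pt ε z = -(p z * ps u z) + κ * ps H z * E z := by
    rw [e4 z hz, hi z hz]
    field_simp [hρ0 z hz]
  exact mhd_total_energy_conservation (hdiff hp) hv (hdiff hH) (hdiff hE) (hdiff hε)
    (hdiff hu) (e1 z hz) (e2 z hz) (e3 z hz) hinternal

theorem stmt2 (U : Set (ℝ × ℝ)) (hU : IsOpen U)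
    (p ρ H E ε u σ i : ℝ × ℝ → ℝ) (κ : ℝ) (hκ : 0 < κ)
    (hp : ContDiffOn ℝ 2 p U) (hρ : ContDiffOn ℝ 2 ρ U)
    (hH : ContDiffOn ℝ 2 H U) (hE : ContDiffOn ℝ 2 E U)
    (hε : ContDiffOn ℝ 2 ε U) (hu : ContDiffOn ℝ 2 u U)
    (hρ0 : ∀ z ∈ U, ρ z ≠ 0)
    (hi : ∀ z ∈ U, i z = κ * ρ z * ps H z)
    (hiE : ∀ z ∈ U, i z = σ z * E z)
    (hσE : ∀ z ∈ U, σ z * E z = κ * ρ z * ps H z)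
    (e1 : ∀ z ∈ U, pt (fun y => 1 / ρ y) z = ps u z)
    (e2 : ∀ z ∈ U, pt u z = -(ps (fun y => p y + κ * H y ^ 2 / 2) z))
    (e3 : ∀ z ∈ U, pt (fun y => H y / ρ y) z = ps E z)
    (e4 : ∀ z ∈ U, pt ε z = -(p z * ps u z) + i z * E z / ρ z) :
    ∀ z ∈ U, pt (fun y => ε y + u y ^ 2 / 2 + κ * H y ^ 2 / (2 * ρ y)) z =
      -(ps (fun y => (p y + κ * H y ^ 2 / 2) * u y) z) +
        κ * ps (fun y => E y * H y) z :=
  stmt2_general U hU p ρ H E ε u i κ hp hρ hH hE hε hu hρ0 hi e1 e2 e3 e4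
end

section
/- Suppose ρ, u, H, E : ℝ² → ℝ are differentiable with ρ nowhere zero, and satisfy (H/ρ)_t = E_s together with the conductivity relation E = H_s (i.e. σE = ρH_s with σ = ρ). Then the additional conservation law (sH/ρ)_t + (H - sE)_s = 0 holds identically, where s denotes the second coordinate. -/
/-! With `q = H/ρ`, the product rule gives `(s q)_t = s q_t = s E_s` and
`(H - s E)_s = H_s - E - s E_s`, so the sum is `H_s - E`, which vanishes by the conductivity
relation. -/

theorem fderiv_snd_mul_apply {f : ℝ × ℝ → ℝ} {z : ℝ × ℝ} (hf : DifferentiableAt ℝ f z)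
    (v : ℝ × ℝ) : fderiv ℝ (fun y => y.2 * f y) z v = z.2 * fderiv ℝ f z v + v.2 * f z := by
  rw [fderiv_fun_mul differentiableAt_snd hf]
  simp [fderiv_snd, mul_comm]

theorem pt_snd_mul {f : ℝ × ℝ → ℝ} {z : ℝ × ℝ} (hf : DifferentiableAt ℝ f z) :
    pt (fun y => y.2 * f y) z = z.2 * pt f z := by
  simp [pt, fderiv_snd_mul_apply hf]

theorem ps_snd_mul {f : ℝ × ℝ → ℝ} {z : ℝ × ℝ} (hf : DifferentiableAt ℝ f z) :
    ps (fun y => y.2 * f y) z = z.2 * ps f z + f z := by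
  simp [ps, fderiv_snd_mul_apply hf]

theorem ps_sub {f g : ℝ × ℝ → ℝ} {z : ℝ × ℝ} (hf : DifferentiableAt ℝ f z)
    (hg : DifferentiableAt ℝ g z) : ps (fun y => f y - g y) z = ps f z - ps g z := by
  simp [ps, fderiv_fun_sub hf hg]

theorem stmt3_general (U : Set (ℝ × ℝ)) (hU : IsOpen U)
    (ρ H E : ℝ × ℝ → ℝ)
    (hρ : ContDiffOn ℝ 1 ρ U)
    (hH : ContDiffOn ℝ 1 H U) (hE : ContDiffOn ℝ 1 E U)
    (hρ0 : ∀ z ∈ U, ρ z ≠ 0)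
    (e1 : ∀ z ∈ U, pt (fun y => H y / ρ y) z = ps E z)
    (e2 : ∀ z ∈ U, E z = ps H z) :
    ∀ z ∈ U, pt (fun y => y.2 * H y / ρ y) z +
      ps (fun y => H y - y.2 * E y) z = 0 := by
  intro z hz
  have differentiableAt {f : ℝ × ℝ → ℝ} (hf : ContDiffOn ℝ 1 f U) : DifferentiableAt ℝ f z :=
    (hf.differentiableOn one_ne_zero).differentiableAt (hU.mem_nhds hz)
  have dH := differentiableAt hH
  have dE := differentiableAt hE
  have dρ := differentiableAt hρ
  have hρz := hρ0 z hz
  simp_rw [mul_div_assoc]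
  rw [pt_snd_mul (by fun_prop (disch := exact hρz)),
    ps_sub (g := fun y => y.2 * E y) dH (by fun_prop), ps_snd_mul dE, e1 z hz, ← e2 z hz]
  ring

theorem stmt3 (U : Set (ℝ × ℝ)) (hU : IsOpen U)
    (ρ u H E : ℝ × ℝ → ℝ)
    (hρ : ContDiffOn ℝ 1 ρ U) (hu : ContDiffOn ℝ 1 u U)
    (hH : ContDiffOn ℝ 1 H U) (hE : ContDiffOn ℝ 1 E U)
    (hρ0 : ∀ z ∈ U, ρ z ≠ 0)
    (e1 : ∀ z ∈ U, pt (fun y => H y / ρ y) z = ps E z)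
    (e2 : ∀ z ∈ U, E z = ps H z) :
    ∀ z ∈ U, pt (fun y => y.2 * H y / ρ y) z +
      ps (fun y => H y - y.2 * E y) z = 0 :=
  stmt3_general U hU ρ H E hρ hH hE hρ0 e1 e2
end

section
/- Let ρ̌, ρ, ρ̂ be nonzero reals and P, P̌ reals satisfying the γ = 3 discrete energy relation: ρ·P/(ρ̂·(ρ̂ + ρ)) − ρ̌·P̌/(ρ·(ρ + ρ̌)) = −P̌·(1/ρ − 1/ρ̌). Then 2P̌/(ρ·ρ̌·(ρ + ρ̌)) = 2P/(ρ̂·ρ·(ρ̂ + ρ)); that is, the discrete entropy 2p̌^{(α)}/(ρρ̌(ρ+ρ̌)) is conserved between consecutive time layers. -/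
/-!
For `γ = 3` the equation of state is `ε = ρ² S / 2` with entropy `S = p / ρ³`. The scheme's
discrete energy on the upper layer pair is exactly `ρ² / 2` times the discrete entropy of that
pair, and the right-hand side of the energy relation, moved over together with the lower-layer
energy, collapses to `ρ² / 2` times the discrete entropy of the lower pair. Cancelling `ρ² / 2`
gives conservation of the discrete entropy.
-/

noncomputable def discreteEntropy (a b p : ℝ) : ℝ := 2 * p / (a * b * (a + b))

lemma mul_div_mul_add_eq_sq_mul_discreteEntropy (a b p : ℝ) (hb : b ≠ 0) :
    b * p / (a * (a + b)) = b ^ 2 / 2 * discreteEntropy a b p := by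
  unfold discreteEntropy
  rw [mul_comm a b, mul_assoc, ← div_div, ← div_div]
  field_simp

lemma energy_flux_eq_sq_mul_discreteEntropy (a b p : ℝ) (ha : a ≠ 0) (hb : b ≠ 0)
    (hab : a + b ≠ 0) :
    b * p / (a * (a + b)) - p * (1 / a - 1 / b) = a ^ 2 / 2 * discreteEntropy a b p := by
  unfold discreteEntropy
  field_simp
  ring

theorem stmt9_general (rDn ρ rUp : ℝ) (hrDn : rDn ≠ 0) (hρ : ρ ≠ 0)
    (h2 : ρ + rDn ≠ 0)
    (P Pdn : ℝ)
    (h : ρ * P / (rUp * (rUp + ρ)) - rDn * Pdn / (ρ * (ρ + rDn)) =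
      -(Pdn * (1 / ρ - 1 / rDn))) :
    2 * Pdn / (ρ * rDn * (ρ + rDn)) = 2 * P / (rUp * ρ * (rUp + ρ)) := by
  have hUp := mul_div_mul_add_eq_sq_mul_discreteEntropy rUp ρ P hρ
  have hDn := energy_flux_eq_sq_mul_discreteEntropy ρ rDn Pdn hρ hrDn h2
  have hScale : ρ ^ 2 / 2 ≠ 0 := by positivity
  show discreteEntropy ρ rDn Pdn = discreteEntropy rUp ρ P
  exact mul_left_cancel₀ hScale (by linarith)

theorem stmt9 (rDn ρ rUp : ℝ) (hrDn : rDn ≠ 0) (hρ : ρ ≠ 0) (hrUp : rUp ≠ 0)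
    (h1 : rUp + ρ ≠ 0) (h2 : ρ + rDn ≠ 0)
    (P Pdn : ℝ)
    (h : ρ * P / (rUp * (rUp + ρ)) - rDn * Pdn / (ρ * (ρ + rDn)) =
      -(Pdn * (1 / ρ - 1 / rDn))) :
    2 * Pdn / (ρ * rDn * (ρ + rDn)) = 2 * P / (rUp * ρ * (rUp + ρ)) :=
  stmt9_general rDn ρ rUp hrDn hρ h2 P Pdn h
end

section
/- Let γ ≥ 2 be a natural number, ρ̌, ρ, ρ̂ positive reals, and P, P̌ reals. Define D(a,b) := ∑_{k=0}^{γ-2} a^{γ-k-1} b^{k-γ+2} for positive reals a, b (so D(ρ̂,ρ) and D(ρ,ρ̌) are well-defined). Suppose the discrete energy relation P/D(ρ̂,ρ) − P̌/D(ρ,ρ̌) = −P̌·(1/ρ − 1/ρ̌) holds. Then (γ−1)·P̌ / ∑_{k=0}^{γ-2} ρ^{γ-k-1} ρ̌^{k+1} = (γ−1)·P / ∑_{k=0}^{γ-2} ρ̂^{γ-k-1} ρ^{k+1}, i.e. the general discrete entropy functional is exactly conserved between consecutive time layers. -/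
/-!
Write `m = γ - 1` and `S(a, b) = ∑_{k<m} a^(m-k) b^(k+1)`. Pulling the negative powers out of
`D` gives `D(a, b) = S(a, b) / b^m`, and the geometric-sum identity
`S(a, b) (b - a) = a b (b^m - a^m)` rewrites the right-hand side of the energy relation as
`-P̌ (ρ̌^m - ρ^m) / S(ρ, ρ̌)`. The `ρ̌^m` terms then cancel, leaving
`P ρ^m / S(ρ̂, ρ) = P̌ ρ^m / S(ρ, ρ̌)`, which is the conservation law after dividing by `ρ^m`.
-/

open Finset

lemma sum_zpow_mul_zpow_succ_eq {K : Type*} [DivisionRing K] (γ : ℕ) (a b : K) :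
    ∑ k ∈ range (γ - 1), a ^ ((γ : ℤ) - k - 1) * b ^ ((k : ℤ) + 1) =
      ∑ k ∈ range (γ - 1), a ^ (γ - 1 - k) * b ^ (k + 1) := by
  refine sum_congr rfl fun k hk => ?_
  have hk : k < γ - 1 := mem_range.mp hk
  rw [show (γ : ℤ) - k - 1 = ((γ - 1 - k : ℕ) : ℤ) by omega, zpow_natCast,
    show (k : ℤ) + 1 = ((k + 1 : ℕ) : ℤ) by push_cast; rfl, zpow_natCast]

lemma sum_zpow_mul_zpow_eq_div {K : Type*} [DivisionRing K] (γ : ℕ) (a : K) {b : K}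
    (hb : b ≠ 0) :
    ∑ k ∈ range (γ - 1), a ^ ((γ : ℤ) - k - 1) * b ^ ((k : ℤ) - γ + 2) =
      (∑ k ∈ range (γ - 1), a ^ (γ - 1 - k) * b ^ (k + 1)) / b ^ (γ - 1) := by
  rw [sum_div]
  refine sum_congr rfl fun k hk => ?_
  have hk : k < γ - 1 := mem_range.mp hk
  rw [mul_div_assoc, ← zpow_natCast, ← zpow_natCast, ← zpow_natCast, ← zpow_sub₀ hb]
  congr 2 <;> omega

lemma sum_pow_mul_pow_succ_mul_sub {R : Type*} [CommRing R] (m : ℕ) (a b : R) :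
    (∑ k ∈ range m, a ^ (m - k) * b ^ (k + 1)) * (b - a) = a * b * (b ^ m - a ^ m) := by
  have hsum : ∑ k ∈ range m, a ^ (m - k) * b ^ (k + 1) =
      a * b * ∑ k ∈ range m, b ^ k * a ^ (m - 1 - k) := by
    rw [mul_sum]
    refine sum_congr rfl fun k hk => ?_
    rw [show m - k = m - 1 - k + 1 by have := mem_range.mp hk; omega]
    ring
  rw [hsum, mul_assoc, geom_sum₂_mul]

lemma sum_pow_mul_pow_succ_pos {R : Type*} [CommSemiring R] [PartialOrder R]
    [IsStrictOrderedRing R] {m : ℕ} (hm : 0 < m) {a b : R} (ha : 0 < a) (hb : 0 < b) :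
    0 < ∑ k ∈ range m, a ^ (m - k) * b ^ (k + 1) :=
  sum_pos (fun _ _ => by positivity) ⟨0, mem_range.mpr hm⟩

lemma div_eq_div_of_energy_relation {K : Type*} [Field K] {m : ℕ} {ρ ρ' S S' P P' : K}
    (hρ : ρ ≠ 0) (hρ' : ρ' ≠ 0) (hS' : S' ≠ 0)
    (hgeom : S' * (ρ' - ρ) = ρ * ρ' * (ρ' ^ m - ρ ^ m))
    (h : P / (S / ρ ^ m) - P' / (S' / ρ' ^ m) = -(P' * (1 / ρ - 1 / ρ'))) :
    P / S = P' / S' := by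
  have hρm : ρ ^ m ≠ 0 := pow_ne_zero m hρ
  rw [div_div_eq_mul_div, mul_div_right_comm] at h
  -- `S` may vanish, so `P / S` is treated as an opaque quantity
  generalize P / S = x at h ⊢
  field_simp at h
  have hx : ρ * ρ' * (x * S' - P') * ρ ^ m = 0 := by linear_combination h - P' * hgeom
  simp only [mul_eq_zero, hρ, hρ', hρm, sub_eq_zero, or_false, false_or] at hx
  rw [← hx, mul_div_cancel_right₀ x hS']

theorem stmt10_general (γ : ℕ)
    (rDn ρ rUp : ℝ) (hrDn : 0 < rDn) (hρ : 0 < ρ)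
    (P Pdn : ℝ)
    (h : P / (∑ k ∈ Finset.range (γ - 1),
          rUp ^ ((γ : ℤ) - k - 1) * ρ ^ ((k : ℤ) - γ + 2)) -
        Pdn / (∑ k ∈ Finset.range (γ - 1),
          ρ ^ ((γ : ℤ) - k - 1) * rDn ^ ((k : ℤ) - γ + 2)) =
      -(Pdn * (1 / ρ - 1 / rDn))) :
    ((γ : ℝ) - 1) * Pdn /
        (∑ k ∈ Finset.range (γ - 1), ρ ^ ((γ : ℤ) - k - 1) * rDn ^ ((k : ℤ) + 1)) =
      ((γ : ℝ) - 1) * P /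
        (∑ k ∈ Finset.range (γ - 1), rUp ^ ((γ : ℤ) - k - 1) * ρ ^ ((k : ℤ) + 1)) := by
  rw [sum_zpow_mul_zpow_eq_div γ _ hρ.ne', sum_zpow_mul_zpow_eq_div γ _ hrDn.ne'] at h
  rw [sum_zpow_mul_zpow_succ_eq, sum_zpow_mul_zpow_succ_eq]
  rcases Nat.eq_zero_or_pos (γ - 1) with hγ | hγ
  · simp [hγ]
  have hpos := sum_pow_mul_pow_succ_pos hγ hρ hrDn
  rw [mul_div_assoc, mul_div_assoc, div_eq_div_of_energy_relation hρ.ne' hrDn.ne' hpos.ne'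
    (sum_pow_mul_pow_succ_mul_sub (γ - 1) ρ rDn) h]

theorem stmt10 (γ : ℕ) (hγ : 2 ≤ γ)
    (rDn ρ rUp : ℝ) (hrDn : 0 < rDn) (hρ : 0 < ρ) (hrUp : 0 < rUp)
    (P Pdn : ℝ)
    (h : P / (∑ k ∈ Finset.range (γ - 1),
          rUp ^ ((γ : ℤ) - k - 1) * ρ ^ ((k : ℤ) - γ + 2)) -
        Pdn / (∑ k ∈ Finset.range (γ - 1),
          ρ ^ ((γ : ℤ) - k - 1) * rDn ^ ((k : ℤ) - γ + 2)) =
      -(Pdn * (1 / ρ - 1 / rDn))) :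
    ((γ : ℝ) - 1) * Pdn /
        (∑ k ∈ Finset.range (γ - 1), ρ ^ ((γ : ℤ) - k - 1) * rDn ^ ((k : ℤ) + 1)) =
      ((γ : ℝ) - 1) * P /
        (∑ k ∈ Finset.range (γ - 1), rUp ^ ((γ : ℤ) - k - 1) * ρ ^ ((k : ℤ) + 1)) :=
  stmt10_general γ rDn ρ rUp hrDn hρ P Pdn h
end

section
/- Let ρ̌, ρ, ρ̂ be positive reals and P, P̌ reals satisfying the γ = 5/3 discrete energy relation: P·(ρ̂^{2/3} + (ρρ̂)^{1/3} + ρ^{2/3})/(ρ^{1/3} ρ̂ (ρ̂^{1/3} + ρ^{1/3})) − P̌·(ρ^{2/3} + (ρ̌ρ)^{1/3} + ρ̌^{2/3})/(ρ̌^{1/3} ρ (ρ^{1/3} + ρ̌^{1/3})) = −P̌·(1/ρ − 1/ρ̌). Then (2/3)·P̌·(ρ̌^{2/3} + (ρρ̌)^{1/3} + ρ^{2/3})/(ρρ̌(ρ̌^{1/3} + ρ^{1/3})) = (2/3)·P·(ρ^{2/3} + (ρ̂ρ)^{1/3} + ρ̂^{2/3})/(ρ̂ρ(ρ^{1/3}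 + ρ̂^{1/3})); i.e. the discrete entropy for γ = 5/3 is conserved between consecutive time layers. -/
/-!
Substituting the cube roots `a, b, c` of the three densities turns every rational power into a
polynomial. Then `1/b³ - 1/a³ = (a² - b²) · F(a, b)`, with `F` the entropy factor, so the energy
relation collapses to `b² · (P · F(b, c) - P̌ · F(a, b)) = 0`.
-/

open Real

/-- Writing `x = ρ₁ ^ (1/3)` and `y = ρ₂ ^ (1/3)`, this is the `γ = 5/3` factor
`(ρ₁^(2/3) + (ρ₁ρ₂)^(1/3) + ρ₂^(2/3)) / (ρ₁ ρ₂ (ρ₁^(1/3) + ρ₂^(1/3)))` of the discrete entropy. -/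
noncomputable def entropyFactor (x y : ℝ) : ℝ :=
  (x ^ 2 + x * y + y ^ 2) / (x ^ 3 * y ^ 3 * (x + y))

lemma one_div_pow_three_sub_one_div_pow_three {x y : ℝ} (hx : 0 < x) (hy : 0 < y) :
    1 / y ^ 3 - 1 / x ^ 3 = (x ^ 2 - y ^ 2) * entropyFactor x y := by
  unfold entropyFactor
  field_simp
  ring

lemma mul_entropyFactor_eq_of_energy_balance {a b c P Pdn : ℝ}
    (ha : 0 < a) (hb : 0 < b)
    (h : b ^ 2 * (P * entropyFactor b c) - a ^ 2 * (Pdn * entropyFactor a b) =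
      -(Pdn * (1 / b ^ 3 - 1 / a ^ 3))) :
    Pdn * entropyFactor a b = P * entropyFactor b c := by
  rw [one_div_pow_three_sub_one_div_pow_three ha hb] at h
  have hsq : b ^ 2 * (P * entropyFactor b c - Pdn * entropyFactor a b) = 0 := by
    linear_combination h
  exact (sub_eq_zero.mp ((mul_eq_zero.mp hsq).resolve_left (by positivity))).symm

lemma pow_three_rpow_one_third {x : ℝ} (hx : 0 ≤ x) : (x ^ 3) ^ ((1 : ℝ) / 3) = x := by
  simpa using pow_rpow_inv_natCast hx (n := 3) (by norm_num)

lemma pow_three_rpow_two_thirds {x : ℝ} (hx : 0 ≤ x) : (x ^ 3) ^ ((2 : ℝ) / 3) = x ^ 2 := by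
  rw [show (2 : ℝ) / 3 = 1 / 3 * 2 by norm_num, rpow_mul (by positivity),
    pow_three_rpow_one_third hx, rpow_two]

lemma exists_pos_pow_three_eq {x : ℝ} (hx : 0 < x) : ∃ a, 0 < a ∧ a ^ 3 = x :=
  ⟨x ^ ((1 : ℝ) / 3), by positivity,
    by simpa using rpow_inv_natCast_pow hx.le (n := 3) (by norm_num)⟩

theorem stmt13 (rDn ρ rUp : ℝ) (hrDn : 0 < rDn) (hρ : 0 < ρ) (hrUp : 0 < rUp)
    (P Pdn : ℝ)
    (h : P * (rUp ^ ((2 : ℝ) / 3) + (ρ * rUp) ^ ((1 : ℝ) / 3) + ρ ^ ((2 : ℝ) / 3)) /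
          (ρ ^ ((1 : ℝ) / 3) * rUp * (rUp ^ ((1 : ℝ) / 3) + ρ ^ ((1 : ℝ) / 3))) -
        Pdn * (ρ ^ ((2 : ℝ) / 3) + (rDn * ρ) ^ ((1 : ℝ) / 3) + rDn ^ ((2 : ℝ) / 3)) /
          (rDn ^ ((1 : ℝ) / 3) * ρ * (ρ ^ ((1 : ℝ) / 3) + rDn ^ ((1 : ℝ) / 3))) =
      -(Pdn * (1 / ρ - 1 / rDn))) :
    2 / 3 * Pdn * (rDn ^ ((2 : ℝ) / 3) + (ρ * rDn) ^ ((1 : ℝ) / 3) + ρ ^ ((2 : ℝ) / 3)) /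
        (ρ * rDn * (rDn ^ ((1 : ℝ) / 3) + ρ ^ ((1 : ℝ) / 3))) =
      2 / 3 * P * (ρ ^ ((2 : ℝ) / 3) + (rUp * ρ) ^ ((1 : ℝ) / 3) + rUp ^ ((2 : ℝ) / 3)) /
        (rUp * ρ * (ρ ^ ((1 : ℝ) / 3) + rUp ^ ((1 : ℝ) / 3))) := by
  obtain ⟨a, ha, rfl⟩ := exists_pos_pow_three_eq hrDn
  obtain ⟨b, hb, rfl⟩ := exists_pos_pow_three_eq hρ
  obtain ⟨c, hc, rfl⟩ := exists_pos_pow_three_eq hrUp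
  simp only [← mul_pow, pow_three_rpow_one_third, pow_three_rpow_two_thirds, ha.le, hb.le, hc.le,
    mul_nonneg] at h ⊢
  have balance : b ^ 2 * (P * entropyFactor b c) - a ^ 2 * (Pdn * entropyFactor a b) =
      -(Pdn * (1 / b ^ 3 - 1 / a ^ 3)) := by
    rw [← h]
    unfold entropyFactor
    field_simp
    ring
  have key := mul_entropyFactor_eq_of_energy_balance ha hb balance
  unfold entropyFactor at key
  linear_combination (2 / 3 : ℝ) * key
end

section
/- Let γ > 1, S ≠ 0, H⁰ ≠ 0 be real constants, and let ρ, u, v, w, H^y, H^z : ℝ² → ℝ be C² with ρ > 0, satisfying: p = S·ρ^γ, (1/ρ)_t = u_s, u_t = −(p + ((H^y)² + (H^z)²)/2)_s, v_t = H⁰ H^y_s, w_t = H⁰ H^z_s, (H^y/ρ)_t = H⁰ v_s, (H^z/ρ)_t = H⁰ w_s. Then the additional conservation law (u/ρ + (v H^y + w H^z)/(H⁰ ρ))_t + (γS/(γ−1)·ρ^{γ−1} − (u² + v² + w²)/2)_s = 0 holds identically. -/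
/-! With τ = 1/ρ, the product rule and the six equations give
(u τ + (v H^y τ + w H^z τ)/H⁰)_t = u u_s + v v_s + w w_s − τ p_s: the magnetic-pressure terms
coming from u_t cancel those coming from v_t and w_t. On the other hand γS/(γ−1)·ρ^{γ−1} is the
enthalpy of the isentropic gas, whose gradient is ∇p/ρ, so the flux has s-derivative
τ p_s − (u u_s + v v_s + w w_s). -/

open Real

section DirectionalDerivative

variable {E : Type*} [NormedAddCommGroup E] [NormedSpace ℝ E] {f g : E → ℝ} {z : E}

theorem fderiv_fun_add_apply (hf : DifferentiableAt ℝ f z) (hg : DifferentiableAt ℝ g z)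
    (d : E) : fderiv ℝ (fun y => f y + g y) z d = fderiv ℝ f z d + fderiv ℝ g z d := by
  rw [fderiv_fun_add hf hg, add_apply]

theorem fderiv_fun_sub_apply (hf : DifferentiableAt ℝ f z) (hg : DifferentiableAt ℝ g z)
    (d : E) : fderiv ℝ (fun y => f y - g y) z d = fderiv ℝ f z d - fderiv ℝ g z d := by
  rw [fderiv_fun_sub hf hg, sub_apply]

theorem fderiv_fun_mul_apply (hf : DifferentiableAt ℝ f z) (hg : DifferentiableAt ℝ g z)
    (d : E) : fderiv ℝ (fun y => f y * g y) z d = f z * fderiv ℝ g z d + g z * fderiv ℝ f z d := by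
  simp [fderiv_fun_mul hf hg]

theorem fderiv_fun_div_const_apply (hf : DifferentiableAt ℝ f z) (c : ℝ) (d : E) :
    fderiv ℝ (fun y => f y / c) z d = fderiv ℝ f z d / c := by
  simp [div_eq_mul_inv, fderiv_mul_const hf, mul_comm]

theorem fderiv_fun_sq_div_two_apply (hf : DifferentiableAt ℝ f z) (d : E) :
    fderiv ℝ (fun y => f y ^ 2 / 2) z d = f z * fderiv ℝ f z d := by
  simp only [pow_two]
  rw [fderiv_fun_div_const_apply (hf.fun_mul hf), fderiv_fun_mul_apply hf hf]
  ring

theorem fderiv_isentropic_enthalpy_apply {ρ : E → ℝ} (hρ : DifferentiableAt ℝ ρ z)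
    (hρz : ρ z ≠ 0) {γ : ℝ} (hγ : γ ≠ 1) (S : ℝ) (d : E) :
    fderiv ℝ (fun y => γ * S / (γ - 1) * ρ y ^ (γ - 1)) z d =
      (ρ z)⁻¹ * fderiv ℝ (fun y => S * ρ y ^ γ) z d := by
  have hγ1 : γ - 1 ≠ 0 := sub_ne_zero.mpr hγ
  rw [fderiv_const_mul (hρ.rpow_const (.inl hρz)), fderiv_const_mul (hρ.rpow_const (.inl hρz)),
    (hρ.hasFDerivAt.rpow_const (.inl hρz)).fderiv, (hρ.hasFDerivAt.rpow_const (.inl hρz)).fderiv]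
  simp only [smul_apply, smul_eq_mul]
  rw [rpow_sub_one hρz (γ - 1), rpow_sub_one hρz γ]
  field_simp

end DirectionalDerivative

open Filter Topology

section ConservationLaw

variable {ρ u v w Hy Hz p : ℝ × ℝ → ℝ} {z : ℝ × ℝ}

theorem ps_add_magneticPressure (hp : DifferentiableAt ℝ p z) (hHy : DifferentiableAt ℝ Hy z)
    (hHz : DifferentiableAt ℝ Hz z) :
    ps (fun y => p y + (Hy y ^ 2 + Hz y ^ 2) / 2) z = ps p z + Hy z * ps Hy z + Hz z * ps Hz z := by
  simp only [ps, add_div]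
  rw [fderiv_fun_add_apply hp (by fun_prop), fderiv_fun_add_apply (by fun_prop) (by fun_prop),
    fderiv_fun_sq_div_two_apply hHy, fderiv_fun_sq_div_two_apply hHz, add_assoc]

theorem pt_conservedDensity {H0 : ℝ} (hH0 : H0 ≠ 0) (hρ : DifferentiableAt ℝ ρ z)
    (hρz : ρ z ≠ 0) (hu : DifferentiableAt ℝ u z) (hv : DifferentiableAt ℝ v z)
    (hw : DifferentiableAt ℝ w z) (hHy : DifferentiableAt ℝ Hy z)
    (hHz : DifferentiableAt ℝ Hz z) (hp : DifferentiableAt ℝ p z)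
    (e1 : pt (fun y => 1 / ρ y) z = ps u z)
    (e2 : pt u z = -(ps (fun y => p y + (Hy y ^ 2 + Hz y ^ 2) / 2) z))
    (e3 : pt v z = H0 * ps Hy z) (e4 : pt w z = H0 * ps Hz z)
    (e5 : pt (fun y => Hy y / ρ y) z = H0 * ps v z)
    (e6 : pt (fun y => Hz y / ρ y) z = H0 * ps w z) :
    pt (fun y => u y / ρ y + (v y * Hy y + w y * Hz y) / (H0 * ρ y)) z =
      u z * ps u z + v z * ps v z + w z * ps w z - (ρ z)⁻¹ * ps p z := by
  have hτ : DifferentiableAt ℝ (fun y => 1 / ρ y) z := by fun_prop (disch := exact hρz)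
  have hHyτ : DifferentiableAt ℝ (fun y => Hy y / ρ y) z := by fun_prop (disch := exact hρz)
  have hHzτ : DifferentiableAt ℝ (fun y => Hz y / ρ y) z := by fun_prop (disch := exact hρz)
  have hform : (fun y => u y / ρ y + (v y * Hy y + w y * Hz y) / (H0 * ρ y)) =
      fun y => u y * (1 / ρ y) + (v y * (Hy y / ρ y) / H0 + w y * (Hz y / ρ y) / H0) := by
    funext y
    ring
  rw [ps_add_magneticPressure hp hHy hHz] at e2
  unfold pt ps at e1 e2 e3 e4 e5 e6 ⊢
  rw [hform, fderiv_fun_add_apply (by fun_prop) (by fun_prop),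
    fderiv_fun_add_apply (by fun_prop) (by fun_prop), fderiv_fun_mul_apply hu hτ,
    fderiv_fun_div_const_apply (by fun_prop), fderiv_fun_div_const_apply (by fun_prop),
    fderiv_fun_mul_apply hv hHyτ, fderiv_fun_mul_apply hw hHzτ, e1, e2, e3, e4, e5, e6]
  field_simp
  ring

theorem ps_conservedFlux {γ S : ℝ} (hγ : γ ≠ 1) (hρ : DifferentiableAt ℝ ρ z) (hρz : ρ z ≠ 0)
    (hu : DifferentiableAt ℝ u z) (hv : DifferentiableAt ℝ v z) (hw : DifferentiableAt ℝ w z)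
    (hp : p =ᶠ[𝓝 z] fun y => S * ρ y ^ γ) :
    ps (fun y => γ * S / (γ - 1) * ρ y ^ (γ - 1) - (u y ^ 2 + v y ^ 2 + w y ^ 2) / 2) z =
      (ρ z)⁻¹ * ps p z - (u z * ps u z + v z * ps v z + w z * ps w z) := by
  simp only [ps, add_div]
  rw [fderiv_fun_sub_apply (by fun_prop (disch := exact hρz)) (by fun_prop),
    fderiv_isentropic_enthalpy_apply hρ hρz hγ S, hp.fderiv_eq,
    fderiv_fun_add_apply (by fun_prop) (by fun_prop),
    fderiv_fun_add_apply (by fun_prop) (by fun_prop), fderiv_fun_sq_div_two_apply hu,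
    fderiv_fun_sq_div_two_apply hv, fderiv_fun_sq_div_two_apply hw]

end ConservationLaw

theorem stmt16_general (U : Set (ℝ × ℝ)) (hU : IsOpen U)
    (γ S H0 : ℝ) (hγ : 1 < γ) (hH0 : H0 ≠ 0)
    (ρ u v w Hy Hz p : ℝ × ℝ → ℝ)
    (hρ : ContDiffOn ℝ 2 ρ U) (hu : ContDiffOn ℝ 2 u U)
    (hv : ContDiffOn ℝ 2 v U) (hw : ContDiffOn ℝ 2 w U)
    (hHy : ContDiffOn ℝ 2 Hy U) (hHz : ContDiffOn ℝ 2 Hz U)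
    (hρ0 : ∀ z ∈ U, 0 < ρ z)
    (hpdef : ∀ z ∈ U, p z = S * ρ z ^ γ)
    (e1 : ∀ z ∈ U, pt (fun y => 1 / ρ y) z = ps u z)
    (e2 : ∀ z ∈ U, pt u z =
      -(ps (fun y => p y + (Hy y ^ 2 + Hz y ^ 2) / 2) z))
    (e3 : ∀ z ∈ U, pt v z = H0 * ps Hy z)
    (e4 : ∀ z ∈ U, pt w z = H0 * ps Hz z)
    (e5 : ∀ z ∈ U, pt (fun y => Hy y / ρ y) z = H0 * ps v z)
    (e6 : ∀ z ∈ U, pt (fun y => Hz y / ρ y) z = H0 * ps w z) :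
    ∀ z ∈ U,
      pt (fun y => u y / ρ y + (v y * Hy y + w y * Hz y) / (H0 * ρ y)) z +
        ps (fun y => γ * S / (γ - 1) * ρ y ^ (γ - 1) -
          (u y ^ 2 + v y ^ 2 + w y ^ 2) / 2) z = 0 := by
  intro z hz
  have hzU : U ∈ 𝓝 z := hU.mem_nhds hz
  have hdiff {f : ℝ × ℝ → ℝ} (hf : ContDiffOn ℝ 2 f U) : DifferentiableAt ℝ f z :=
    (hf.contDiffAt hzU).differentiableAt two_ne_zero
  have hρz : ρ z ≠ 0 := (hρ0 z hz).ne'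
  have hp : p =ᶠ[𝓝 z] fun y => S * ρ y ^ γ := eventually_of_mem hzU hpdef
  have hpd : DifferentiableAt ℝ p z :=
    hp.differentiableAt_iff.mpr (((hdiff hρ).rpow_const (.inl hρz)).const_mul S)
  rw [pt_conservedDensity hH0 (hdiff hρ) hρz (hdiff hu) (hdiff hv) (hdiff hw) (hdiff hHy)
      (hdiff hHz) hpd (e1 z hz) (e2 z hz) (e3 z hz) (e4 z hz) (e5 z hz) (e6 z hz),
    ps_conservedFlux hγ.ne' (hdiff hρ) hρz (hdiff hu) (hdiff hv) (hdiff hw) hp]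
  ring

theorem stmt16 (U : Set (ℝ × ℝ)) (hU : IsOpen U)
    (γ S H0 : ℝ) (hγ : 1 < γ) (hS : S ≠ 0) (hH0 : H0 ≠ 0)
    (ρ u v w Hy Hz p : ℝ × ℝ → ℝ)
    (hρ : ContDiffOn ℝ 2 ρ U) (hu : ContDiffOn ℝ 2 u U)
    (hv : ContDiffOn ℝ 2 v U) (hw : ContDiffOn ℝ 2 w U)
    (hHy : ContDiffOn ℝ 2 Hy U) (hHz : ContDiffOn ℝ 2 Hz U)
    (hρ0 : ∀ z ∈ U, 0 < ρ z)
    (hpdef : ∀ z ∈ U, p z = S * ρ z ^ γ)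
    (e1 : ∀ z ∈ U, pt (fun y => 1 / ρ y) z = ps u z)
    (e2 : ∀ z ∈ U, pt u z =
      -(ps (fun y => p y + (Hy y ^ 2 + Hz y ^ 2) / 2) z))
    (e3 : ∀ z ∈ U, pt v z = H0 * ps Hy z)
    (e4 : ∀ z ∈ U, pt w z = H0 * ps Hz z)
    (e5 : ∀ z ∈ U, pt (fun y => Hy y / ρ y) z = H0 * ps v z)
    (e6 : ∀ z ∈ U, pt (fun y => Hz y / ρ y) z = H0 * ps w z) :
    ∀ z ∈ U,
      pt (fun y => u y / ρ y + (v y * Hy y + w y * Hz y) / (H0 * ρ y)) z +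
        ps (fun y => γ * S / (γ - 1) * ρ y ^ (γ - 1) -
          (u y ^ 2 + v y ^ 2 + w y ^ 2) / 2) z = 0 :=
  stmt16_general U hU γ S H0 hγ hH0 ρ u v w Hy Hz p hρ hu hv hw hHy hHz hρ0 hpdef e1 e2 e3 e4 e5 e6
end
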